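/- arXiv:1409.5641 — 2 statements merged into one kernel-verified Lean document; each statement's English description precedes it below -/
import Mathlib

section
/- The number of runs in any string of length n is less than n; that is, for every string t of length n, the number of pairs (i,j) with 1 ≤ i ≤ j ≤ n such that t[i..j] is a run of t is strictly less than n. -/
/-- `p` is a period of the substring `t[i..j]` of the 1-indexed string `t`:
`1 ≤ p ≤ |t[i..j]| = j - i + 1`, and `t[k] = t[k + p]` whenever both positions
lie in `[i..j]` (vacuously, the length is always a period). -/
def IsPeriodOf {α : Type*} (t : ℕ → α) (i j p : ℕ) : Prop :=
  1 ≤ p ∧ p ≤ j + 1 - i ∧ ∀ k, i ≤ k → k + p ≤ j → t (k + p) = t k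

/-- The minimal period of the substring `t[i..j]`. -/
noncomputable def minPeriod {α : Type*} (t : ℕ → α) (i j : ℕ) : ℕ :=
  sInf {p | IsPeriodOf t i j p}

/-- `t[i..j]` is a run of the string `t[1..n]`: its exponent is at least `2`
(i.e. `j - i + 1 ≥ 2 · minPeriod`), and the extensions `t[i-1..j]` (if `i > 1`)
and `t[i..j+1]` (if `j < n`) have strictly larger minimal periods. -/
def IsRun {α : Type*} (t : ℕ → α) (n i j : ℕ) : Prop :=
  1 ≤ i ∧ i ≤ j ∧ j ≤ n ∧
  2 * minPeriod t i j ≤ j + 1 - i ∧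
  (1 < i → minPeriod t i j < minPeriod t (i - 1) j) ∧
  (j < n → minPeriod t i j < minPeriod t i (j + 1))

/-!
Following Bannai, I, Inenaga, Nakashima, Takeda and Tsuruta: orient a run `t[i..j]` of minimal
period `p` by the order (`<` or its dual) in which `t[j+1]` is smaller than `t[j+1-p]`, and send it
to the position `k ∈ (i, i+p]` where the least (in that order) of its length-`p` factors starting in
`(i, i+p]` begins. This factor is a Lyndon word, and it is the longest Lyndon word starting at `k`:
a longer one would reach the descent at `j + 1`. Hence two runs of the same orientation sent to the
same `k` have the same period, and then coincide by maximality. A Lyndon root of length `≥ 2`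
begins with a letter strictly smaller than its last letter, which equals `t[k-1]`; so `p = 1`
exactly when `t[k-1] = t[k]`, whatever the orientation, and two roots of length `≥ 2` starting at
the same `k` cannot be Lyndon for opposite orders. As `2 ≤ k ≤ n`, there are at most `n - 1` runs.
-/

open OrderDual

theorem exists_modEq_mem_Ico (a x : ℕ) {p : ℕ} (hp : 0 < p) :
    ∃ y ∈ Set.Ico a (a + p), y ≡ x [MOD p] := by
  have hmod := Nat.mod_lt (x + p * a - a) hp
  refine ⟨a + (x + p * a - a) % p, ⟨by omega, by omega⟩, ?_⟩
  have hle : a ≤ p * a := Nat.le_mul_of_pos_left a hp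
  calc a + (x + p * a - a) % p ≡ a + (x + p * a - a) [MOD p] :=
        Nat.ModEq.add_left a (Nat.mod_modEq _ p)
    _ = x + p * a := by omega
    _ ≡ x [MOD p] := by simp [Nat.ModEq, Nat.add_mul_mod_self_left]

def factor {β : Type*} (s : ℕ → β) (a m : ℕ) : List β := (List.range' a m).map s

section Factor

variable {β : Type*} (s : ℕ → β) (a m : ℕ)

@[simp] theorem length_factor : (factor s a m).length = m := by simp [factor]

@[simp] theorem getElem_factor {d : ℕ} (hd : d < (factor s a m).length) :
    (factor s a m)[d] = s (a + d) := by
  simp [factor]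

theorem drop_factor (q : ℕ) : (factor s a m).drop q = factor s (a + q) (m - q) := by
  simp [factor, ← List.map_drop, List.drop_range']

theorem take_factor {q : ℕ} (hq : q ≤ m) : (factor s a m).take q = factor s a q := by
  simp [factor, ← List.map_take, List.take_range'_of_length_ge hq]

theorem factor_prefix_factor {m' : ℕ} (h : m ≤ m') : factor s a m <+: factor s a m' :=
  take_factor s a m' h ▸ List.take_prefix m _

theorem factor_toDual_comp :
    factor (toDual ∘ s) a m = (factor s a m).map toDual := by
  simp [factor]

end Factor

namespace List

variable {β : Type*} [LinearOrder β]

theorem append_lt_append_of_lt_of_not_prefix {u v : List β} (h : u < v) (hpre : ¬ u <+: v)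
    (u' v' : List β) : u ++ u' < v ++ v' := by
  rcases List.lt_iff_exists.1 h with ⟨hu, -⟩ | ⟨e, he, he', hagree, hlt⟩
  · exact absurd (hu ▸ take_prefix _ _) hpre
  · refine List.lt_iff_exists.2
      (.inr ⟨e, by rw [length_append]; omega, by rw [length_append]; omega, fun d hd => ?_, ?_⟩)
    · rw [getElem_append_left (by omega), getElem_append_left (by omega)]
      exact hagree d hd
    · rwa [getElem_append_left he, getElem_append_left he']

theorem lt_of_append_lt_append_left {c u v : List β} (h : c ++ u < c ++ v) : u < v := by
  rcases lt_trichotomy u v with huv | rfl | hvu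
  · exact huv
  · exact absurd h (lt_irrefl _)
  · exact absurd (append_left_lt hvu) h.not_gt

def IsLyndon (w : List β) : Prop :=
  ∀ m, 0 < m → m < w.length → w < w.drop m

theorem IsLyndon.getElem_zero_le {w : List β} (hw : w.IsLyndon) {m : ℕ} (hm0 : 0 < m)
    (hm : m < w.length) : w[0] ≤ w[m] := by
  have h := hw m hm0 hm
  rw [drop_eq_getElem_cons hm] at h
  cases w with
  | nil => exact absurd hm (Nat.not_lt_zero m)
  | cons a u => exact head_le_of_lt h

theorem IsLyndon.getElem_zero_lt_getElem_length_sub_one {w : List β} (hw : w.IsLyndon)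
    (h2 : 2 ≤ w.length) : w[0] < w[w.length - 1] := by
  have h := hw (w.length - 1) (by omega) (by omega)
  rw [drop_eq_getElem_cons (by omega), Nat.sub_add_cancel (by omega), drop_length] at h
  match w, h2 with
  | a :: b :: u, _ => simpa [cons_lt_cons_iff] using h

theorem IsLyndon.not_isLyndon_map_toDual {u v : List β} (hu : u.IsLyndon) (hu2 : 2 ≤ u.length)
    (hv2 : 2 ≤ v.length) (h : u <+: v ∨ v <+: u) : ¬ (v.map toDual).IsLyndon := by
  intro hv
  rcases h with h | h
  · have hlen := h.length_le
    have h1 := hu.getElem_zero_lt_getElem_length_sub_one hu2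
    have h2 := hv.getElem_zero_le (m := u.length - 1) (by omega) (by rw [length_map]; omega)
    simp only [getElem_map, toDual_le_toDual] at h2
    rw [h.getElem, h.getElem] at h1
    exact h2.not_gt h1
  · have hlen := h.length_le
    have h1 := hv.getElem_zero_lt_getElem_length_sub_one (by rwa [length_map])
    have h2 := hu.getElem_zero_le (m := v.length - 1) (by omega) (by omega)
    simp only [getElem_map, length_map, toDual_lt_toDual, h.getElem] at h1
    exact h2.not_gt h1

theorem isLyndon_of_forall_lt_rotate {w : List β}
    (h : ∀ m, 0 < m → m < w.length → w < w.rotate m) : w.IsLyndon := by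
  intro m hm0 hm
  have hrot : ∀ q ≤ w.length, w.rotate q = w.drop q ++ w.take q :=
    fun q hq => rotate_eq_drop_append_take hq
  refine lt_of_not_ge fun hle => ?_
  have hlt : w.drop m < w := lt_of_le_of_ne hle fun heq => by
    have := congrArg length heq
    rw [length_drop] at this
    omega
  by_cases hpre : w.drop m <+: w
  · -- comparing `w = w.drop m ++ y` with its rotations by `m` and by `|w| - m` gives
    -- `y < w.take m` and `w.take m ≤ y`
    obtain ⟨y, hy⟩ := hpre
    have hylen : y.length = m := by
      have := congrArg length hy
      rw [length_append, length_drop] at this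
      omega
    have hyu : y < w.take m := by
      have := h m hm0 hm
      rw [hrot m hm.le] at this
      nth_rewrite 1 [← hy] at this
      exact lt_of_append_lt_append_left this
    have hy' : w.rotate (w.length - m) = y ++ w.drop m := by
      have hd := drop_left' (l₁ := w.drop m) (l₂ := y) (i := w.length - m) (length_drop ..)
      have ht := take_left' (l₁ := w.drop m) (l₂ := y) (i := w.length - m) (length_drop ..)
      rw [hy] at hd ht
      rw [hrot _ (by omega), hd, ht]
    have hyw : y ++ w.drop m < w := by
      have := append_lt_append_of_lt_of_not_prefix hyu
        (fun hp => hyu.ne (hp.eq_of_length (by rw [length_take]; omega))) (w.drop m) (w.drop m)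
      rwa [take_append_drop] at this
    exact hyw.not_gt (hy' ▸ h (w.length - m) (by omega) (by omega))
  · have := append_lt_append_of_lt_of_not_prefix hlt hpre (w.take m) []
    rw [append_nil, ← hrot m hm.le] at this
    exact this.not_gt (h m hm0 hm)

end List

section Periodicity

variable {β : Type*} {s : ℕ → β} {i j p : ℕ}

theorem IsPeriodOf.apply_add_mul (h : IsPeriodOf s i j p) {x : ℕ} (hx : i ≤ x) :
    ∀ c, x + c * p ≤ j → s (x + c * p) = s x
  | 0, _ => by simp
  | c + 1, hc => by
    rw [show x + (c + 1) * p = x + c * p + p by ring] at hc ⊢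
    rw [h.2.2 _ (by omega) hc, h.apply_add_mul hx c (by omega)]

theorem IsPeriodOf.apply_eq_of_modEq (h : IsPeriodOf s i j p) {x y : ℕ} (hx : i ≤ x)
    (hxj : x ≤ j) (hy : i ≤ y) (hyj : y ≤ j) (hxy : x ≡ y [MOD p]) : s x = s y := by
  wlog hle : x ≤ y generalizing x y
  · exact (this hy hyj hx hxj hxy.symm (by omega)).symm
  obtain ⟨c, hc⟩ := (Nat.modEq_iff_dvd' hle).mp hxy
  rw [show y = x + c * p by rw [Nat.mul_comm] at hc; omega] at hyj ⊢
  exact (h.apply_add_mul hx c hyj).symm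

theorem IsPeriodOf.factor_add (h : IsPeriodOf s i j p) {a m : ℕ} (ha : i ≤ a)
    (ham : a + p + m ≤ j + 1) : factor s (a + p) m = factor s a m := by
  refine List.ext_getElem (by simp only [length_factor]) fun d hd _ => ?_
  rw [length_factor] at hd
  simp only [getElem_factor, show a + p + d = a + d + p by ring]
  exact h.2.2 _ (by omega) (by omega)

theorem IsPeriodOf.rotate_factor (h : IsPeriodOf s i j p) {k k' m : ℕ} (hk : i ≤ k)
    (hkj : k + p ≤ j + 1) (hk' : i ≤ k') (hk'j : k' + p ≤ j + 1) (hm : m ≤ p)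
    (hmod : k' ≡ k + m [MOD p]) : (factor s k p).rotate m = factor s k' p := by
  rw [List.rotate_eq_drop_append_take (by rwa [length_factor]), drop_factor, take_factor s k p hm]
  refine List.ext_getElem (by simp only [List.length_append, length_factor]; omega)
    fun d _ hd => ?_
  rw [length_factor] at hd
  rw [getElem_factor]
  by_cases hdm : d < p - m
  · rw [List.getElem_append_left (by rwa [length_factor]), getElem_factor]
    exact h.apply_eq_of_modEq (by omega) (by omega) (by omega) (by omega)
      (Nat.ModEq.add_right d hmod.symm)
  · rw [List.getElem_append_right (by rw [length_factor]; omega), getElem_factor, length_factor]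
    refine h.apply_eq_of_modEq (by omega) (by omega) (by omega) (by omega) ?_
    calc k + (d - (p - m)) ≡ k + (d - (p - m)) + p [MOD p] := (Nat.add_modEq_right).symm
      _ = k + m + d := by omega
      _ ≡ k' + d [MOD p] := Nat.ModEq.add_right d hmod.symm

end Periodicity

section Runs

variable {β : Type*} {s : ℕ → β} {n i j i' j' k : ℕ}

theorem isPeriodOf_minPeriod (hij : i ≤ j) : IsPeriodOf s i j (minPeriod s i j) :=
  Nat.sInf_mem (s := {p | IsPeriodOf s i j p})
    ⟨j + 1 - i, by omega, le_rfl, fun _ _ _ => by omega⟩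

theorem minPeriod_le {q : ℕ} (h : IsPeriodOf s i j q) : minPeriod s i j ≤ q :=
  Nat.sInf_le h

theorem IsRun.isPeriodOf_minPeriod (hr : IsRun s n i j) : IsPeriodOf s i j (minPeriod s i j) :=
  _root_.isPeriodOf_minPeriod hr.2.1

theorem IsRun.toDual_comp (hr : IsRun s n i j) : IsRun (toDual ∘ s) n i j := hr

theorem IsRun.apply_left_ne (hr : IsRun s n i j) (hi : 1 < i) :
    s (i - 1 + minPeriod s i j) ≠ s (i - 1) := by
  have ⟨_, _, _, _, hleft, _⟩ := hr
  have ⟨hp, hple, hper⟩ := hr.isPeriodOf_minPeriod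
  intro heq
  have : minPeriod s (i - 1) j ≤ minPeriod s i j := by
    refine minPeriod_le (q := minPeriod s i j) ⟨hp, by omega, fun x hx hxj => ?_⟩
    rcases hx.eq_or_lt with rfl | hx
    · exact heq
    · exact hper x (by omega) hxj
  exact (hleft hi).not_ge this

theorem IsRun.apply_right_ne (hr : IsRun s n i j) (hj : j < n) :
    s (j + 1) ≠ s (j + 1 - minPeriod s i j) := by
  have ⟨_, _, _, _, _, hright⟩ := hr
  have ⟨hp, hple, hper⟩ := hr.isPeriodOf_minPeriod
  intro heq
  have : minPeriod s i (j + 1) ≤ minPeriod s i j := by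
    refine minPeriod_le (q := minPeriod s i j) ⟨hp, by omega, fun x hx hxj => ?_⟩
    rcases hxj.eq_or_lt with hxj | hxj
    · rw [hxj, heq, show x = j + 1 - minPeriod s i j by omega]
    · exact hper x hx (by omega)
  exact (hright hj).not_ge this

/-- The hypotheses say that both runs contain the positions `k - 1, …, k + p - 1`. -/
theorem IsRun.eq_of_minPeriod_eq (hr : IsRun s n i j) (hr' : IsRun s n i' j')
    (hp : minPeriod s i' j' = minPeriod s i j) (hk : i < k) (hk' : i' < k)
    (hkj : k + minPeriod s i j ≤ j + 1) (hkj' : k + minPeriod s i j ≤ j' + 1) :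
    i = i' ∧ j = j' := by
  have ⟨hi, _, hjn, hexp, _, _⟩ := hr
  have ⟨hi', _, hjn', hexp', _, _⟩ := hr'
  have hper := hr.isPeriodOf_minPeriod
  have hper' := hr'.isPeriodOf_minPeriod
  rw [hp] at hper' hexp'
  obtain rfl : i = i' := by
    by_contra hne
    rcases lt_or_gt_of_ne hne with h | h
    · exact hr'.apply_left_ne (by omega) (hp ▸ hper.2.2 (i' - 1) (by omega) (by omega))
    · exact hr.apply_left_ne (by omega) (hper'.2.2 (i - 1) (by omega) (by omega))
  refine ⟨rfl, ?_⟩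
  by_contra hne
  rcases lt_or_gt_of_ne hne with h | h
  · refine hr.apply_right_ne (by omega) ?_
    have := hper'.2.2 (j + 1 - minPeriod s i j) (by omega) (by omega)
    rwa [Nat.sub_add_cancel (by omega)] at this
  · refine hr'.apply_right_ne (by omega) ?_
    have := hper.2.2 (j' + 1 - minPeriod s i j) (by omega) (by omega)
    rwa [Nat.sub_add_cancel (by omega), ← hp] at this

theorem IsRun.factor_injOn (hr : IsRun s n i j) :
    Set.InjOn (fun k => factor s k (minPeriod s i j)) (Set.Ioc i (i + minPeriod s i j)) := by
  intro k₁ hk₁ k₂ hk₂ heq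
  by_contra hne
  wlog hlt : k₁ < k₂ generalizing k₁ k₂
  · exact this hk₂ hk₁ heq.symm (Ne.symm hne) (by omega)
  obtain ⟨hk₁, -⟩ := hk₁
  obtain ⟨-, hk₂⟩ := hk₂
  have ⟨_, _, _, hexp, _, _⟩ := hr
  have hper := hr.isPeriodOf_minPeriod
  set p := minPeriod s i j
  have hshift : ∀ d < p, s (k₁ + d) = s (k₂ + d) := fun d hd => by
    simpa [factor, hd] using congrArg (·[d]?) heq
  have : p ≤ k₂ - k₁ := by
    refine minPeriod_le (q := k₂ - k₁) ⟨by omega, by omega, fun x hx hxj => ?_⟩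
    obtain ⟨y, ⟨hy, hyp⟩, hyx⟩ := exists_modEq_mem_Ico k₁ x (show 0 < p by omega)
    calc s (x + (k₂ - k₁)) = s (y + (k₂ - k₁)) :=
          hper.apply_eq_of_modEq (by omega) (by omega) (by omega) (by omega)
            (Nat.ModEq.add_right _ hyx.symm)
      _ = s y := by
          have := hshift (y - k₁) (by omega)
          rwa [show k₁ + (y - k₁) = y by omega, show k₂ + (y - k₁) = y + (k₂ - k₁) by omega,
            eq_comm] at this
      _ = s x := hper.apply_eq_of_modEq (by omega) (by omega) (by omega) (by omega) hyx
  omega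

end Runs

section LyndonRoots

variable {β : Type*} [LinearOrder β] {s : ℕ → β} {n i j i' j' k m : ℕ}

def IsRootAt (s : ℕ → β) (i j k : ℕ) : Prop :=
  k ∈ Set.Ioc i (i + minPeriod s i j) ∧
    ∀ k' ∈ Set.Ioc i (i + minPeriod s i j),
      factor s k (minPeriod s i j) ≤ factor s k' (minPeriod s i j)

def EndsDescending (s : ℕ → β) (n i j : ℕ) : Prop :=
  j < n → s (j + 1) < s (j + 1 - minPeriod s i j)

theorem IsRun.exists_isRootAt (hr : IsRun s n i j) : ∃ k, IsRootAt s i j k :=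
  Set.exists_min_image _ _ (Set.finite_Ioc _ _)
    (Set.nonempty_Ioc.2 (by have := hr.isPeriodOf_minPeriod.1; omega))

theorem IsRootAt.left_lt (hk : IsRootAt s i j k) : i < k := hk.1.1

theorem IsRun.add_minPeriod_le_of_isRootAt (hr : IsRun s n i j) (hk : IsRootAt s i j k) :
    k + minPeriod s i j ≤ j + 1 := by
  have ⟨_, hij, _, hexp, _, _⟩ := hr
  have := hk.1.2
  omega

theorem IsRun.mem_Icc_of_isRootAt (hr : IsRun s n i j) (hk : IsRootAt s i j k) :
    k ∈ Set.Icc 2 n := by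
  have ⟨hi, _, hjn, _, _, _⟩ := hr
  have := hr.add_minPeriod_le_of_isRootAt hk
  have := hr.isPeriodOf_minPeriod.1
  have := hk.left_lt
  exact ⟨by omega, by omega⟩

theorem IsRun.isLyndon_factor (hr : IsRun s n i j) (hk : IsRootAt s i j k) :
    (factor s k (minPeriod s i j)).IsLyndon := by
  obtain ⟨⟨hik, hkp⟩, hmin⟩ := hk
  have ⟨_, hij, _, hexp, _, _⟩ := hr
  have hper := hr.isPeriodOf_minPeriod
  set p := minPeriod s i j
  refine List.isLyndon_of_forall_lt_rotate fun m hm0 hm => ?_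
  rw [length_factor] at hm
  obtain ⟨k', ⟨hk'₁, hk'₂⟩, hk'⟩ := exists_modEq_mem_Ico (i + 1) (k + m) (show 0 < p by omega)
  have hk'k : k' ≠ k := by
    rintro rfl
    have := Nat.modEq_zero_iff_dvd.1 (Nat.ModEq.add_left_cancel' k' hk').symm
    exact hm0.ne' (Nat.eq_zero_of_dvd_of_lt this hm)
  rw [hper.rotate_factor (by omega) (by omega) (by omega) (by omega) hm.le hk']
  exact lt_of_le_of_ne (hmin k' ⟨by omega, by omega⟩)
    (hr.factor_injOn.ne ⟨hik, hkp⟩ ⟨by omega, by omega⟩ hk'k.symm)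

/-- A longer Lyndon word starting at `k` would reach the descent at `j + 1`, which makes its
suffix starting at `k + p` smaller than itself. -/
theorem IsRun.not_isLyndon_factor (hr : IsRun s n i j) (hd : EndsDescending s n i j)
    (hk : IsRootAt s i j k) (hm : minPeriod s i j < m) (hkm : k + m ≤ n + 1) :
    ¬ (factor s k m).IsLyndon := by
  intro hL
  have hper := hr.isPeriodOf_minPeriod
  have hkj := hr.add_minPeriod_le_of_isRootAt hk
  have hik := hk.left_lt
  set p := minPeriod s i j
  have hp := hper.1
  have h := hL p hp (by rwa [length_factor])
  rw [drop_factor] at h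
  refine h.not_gt (List.lt_iff_exists.2 ?_)
  simp only [length_factor]
  by_cases hkmj : k + m ≤ j + 1
  · left
    rw [take_factor _ _ _ (by omega), hper.factor_add (by omega) (by omega)]
    exact ⟨rfl, by omega⟩
  · right
    have hjn : j < n := by omega
    refine ⟨j + 1 - p - k, by omega, by omega, fun d hd => ?_, ?_⟩
    · simp only [getElem_factor, show k + p + d = k + d + p by ring]
      exact hper.2.2 _ (by omega) (by omega)
    · simp only [getElem_factor]
      rw [show k + p + (j + 1 - p - k) = j + 1 by omega,
        show k + (j + 1 - p - k) = j + 1 - p by omega]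
      exact hd hjn

theorem IsRun.eq_of_isRootAt (hr : IsRun s n i j) (hr' : IsRun s n i' j')
    (hd : EndsDescending s n i j) (hd' : EndsDescending s n i' j')
    (hk : IsRootAt s i j k) (hk' : IsRootAt s i' j' k) : i = i' ∧ j = j' := by
  have hkj := hr.add_minPeriod_le_of_isRootAt hk
  have hkj' := hr'.add_minPeriod_le_of_isRootAt hk'
  have hjn := hr.2.2.1
  have hjn' := hr'.2.2.1
  have hp : minPeriod s i' j' = minPeriod s i j := by
    rcases lt_trichotomy (minPeriod s i' j') (minPeriod s i j) with h | h | h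
    · exact absurd (hr.isLyndon_factor hk) (hr'.not_isLyndon_factor hd' hk' h (by omega))
    · exact h
    · exact absurd (hr'.isLyndon_factor hk') (hr.not_isLyndon_factor hd hk h (by omega))
  exact hr.eq_of_minPeriod_eq hr' hp hk.left_lt hk'.left_lt hkj (hp ▸ hkj')

/-- A Lyndon root of length `≥ 2` starts with a letter smaller than its last one, which repeats
the letter preceding the root. -/
theorem IsRun.minPeriod_eq_one_iff (hr : IsRun s n i j) (hk : IsRootAt s i j k) :
    minPeriod s i j = 1 ↔ s (k - 1) = s k := by
  have hper := hr.isPeriodOf_minPeriod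
  have hkj := hr.add_minPeriod_le_of_isRootAt hk
  have hik := hk.left_lt
  constructor
  · intro h1
    have := hper.2.2 (k - 1) (by omega) (by omega)
    rwa [h1, Nat.sub_add_cancel (by omega), eq_comm] at this
  · intro heq
    by_contra h1
    have hp := hper.1
    have hlt := (hr.isLyndon_factor hk).getElem_zero_lt_getElem_length_sub_one
      (by rw [length_factor]; omega)
    simp only [getElem_factor, length_factor, add_zero] at hlt
    have := hper.2.2 (k - 1) (by omega) (by omega)
    rw [show k - 1 + minPeriod s i j = k + (minPeriod s i j - 1) by omega] at this
    exact hlt.ne (heq ▸ this.symm)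

theorem IsRun.eq_of_isRootAt_of_isRootAt_toDual (hr : IsRun s n i j) (hr' : IsRun s n i' j')
    (hk : IsRootAt s i j k) (hk' : IsRootAt (toDual ∘ s) i' j' k) : i = i' ∧ j = j' := by
  have hrd := hr'.toDual_comp
  have hkj := hr.add_minPeriod_le_of_isRootAt hk
  have hkj' : k + minPeriod s i' j' ≤ j' + 1 := hrd.add_minPeriod_le_of_isRootAt hk'
  have hone := hr.minPeriod_eq_one_iff hk
  have hone' : minPeriod s i' j' = 1 ↔ s (k - 1) = s k := hrd.minPeriod_eq_one_iff hk'
  by_cases heq : s (k - 1) = s k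
  · have hp : minPeriod s i' j' = minPeriod s i j := by rw [hone.2 heq, hone'.2 heq]
    exact hr.eq_of_minPeriod_eq hr' hp hk.left_lt hk'.left_lt hkj (hp ▸ hkj')
  · have hp := hr.isPeriodOf_minPeriod.1
    have hp' := hr'.isPeriodOf_minPeriod.1
    have hp1 := mt hone.1 heq
    have hp1' := mt hone'.1 heq
    refine absurd ?_ ((hr.isLyndon_factor hk).not_isLyndon_map_toDual
      (v := factor s k (minPeriod s i' j')) (by rw [length_factor]; omega)
      (by rw [length_factor]; omega) ?_)
    · rw [← factor_toDual_comp]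
      exact hrd.isLyndon_factor hk'
    · rcases le_total (minPeriod s i j) (minPeriod s i' j') with h | h
      · exact .inl (factor_prefix_factor _ _ _ h)
      · exact .inr (factor_prefix_factor _ _ _ h)

end LyndonRoots

section OrientedRoots

variable {α : Type*} [LinearOrder α] {t : ℕ → α} {n i j i' j' k : ℕ}

theorem IsRun.endsDescending_or_toDual (hr : IsRun t n i j) :
    EndsDescending t n i j ∨ EndsDescending (toDual ∘ t) n i j := by
  by_cases hd : EndsDescending t n i j
  · exact .inl hd
  · unfold EndsDescending at hd
    push Not at hd
    exact .inr fun _ => toDual_lt_toDual.2 (hd.2.lt_of_ne (hr.apply_right_ne hd.1).symm)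

def IsOrientedRootAt (t : ℕ → α) (n i j k : ℕ) : Prop :=
  EndsDescending t n i j ∧ IsRootAt t i j k ∨
    EndsDescending (toDual ∘ t) n i j ∧ IsRootAt (toDual ∘ t) i j k

theorem IsRun.exists_isOrientedRootAt (hr : IsRun t n i j) :
    ∃ k, IsOrientedRootAt t n i j k := by
  rcases hr.endsDescending_or_toDual with hd | hd
  · obtain ⟨k, hk⟩ := hr.exists_isRootAt
    exact ⟨k, .inl ⟨hd, hk⟩⟩
  · obtain ⟨k, hk⟩ := hr.toDual_comp.exists_isRootAt
    exact ⟨k, .inr ⟨hd, hk⟩⟩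

theorem IsRun.mem_Icc_of_isOrientedRootAt (hr : IsRun t n i j)
    (hk : IsOrientedRootAt t n i j k) : k ∈ Set.Icc 2 n := by
  rcases hk with ⟨-, hk⟩ | ⟨-, hk⟩
  · exact hr.mem_Icc_of_isRootAt hk
  · exact hr.toDual_comp.mem_Icc_of_isRootAt hk

theorem IsRun.eq_of_isOrientedRootAt (hr : IsRun t n i j) (hr' : IsRun t n i' j')
    (hk : IsOrientedRootAt t n i j k) (hk' : IsOrientedRootAt t n i' j' k) :
    i = i' ∧ j = j' := by
  rcases hk with ⟨hd, hk⟩ | ⟨hd, hk⟩ <;> rcases hk' with ⟨hd', hk'⟩ | ⟨hd', hk'⟩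
  · exact hr.eq_of_isRootAt hr' hd hd' hk hk'
  · exact hr.eq_of_isRootAt_of_isRootAt_toDual hr' hk hk'
  · exact (hr'.eq_of_isRootAt_of_isRootAt_toDual hr hk' hk).imp Eq.symm Eq.symm
  · exact hr.toDual_comp.eq_of_isRootAt hr'.toDual_comp hd hd' hk hk'

end OrientedRoots

/-- Every string of length `n ≥ 1` contains fewer than `n` runs. -/
theorem number_of_runs_lt_length {α : Type*} [LinearOrder α]
    (n : ℕ) (hn : 0 < n) (t : ℕ → α) :
    {ij : ℕ × ℕ | IsRun t n ij.1 ij.2}.ncard < n := by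
  set runs := {ij : ℕ × ℕ | IsRun t n ij.1 ij.2}
  choose! root hroot using fun (r : ℕ × ℕ) (hr : IsRun t n r.1 r.2) => hr.exists_isOrientedRootAt
  have hinj : Set.InjOn root runs := fun r hr r' hr' h =>
    Prod.ext_iff.2 (hr.eq_of_isOrientedRootAt hr' (hroot r hr) (h ▸ hroot r' hr'))
  calc runs.ncard ≤ (Set.Icc 2 n).ncard :=
        Set.ncard_le_ncard_of_injOn root
          (fun r hr => hr.mem_Icc_of_isOrientedRootAt (hroot r hr)) hinj
    _ = n - 1 := by rw [Set.ncard_Icc_nat]; omega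
    _ < n := by omega
end

section
/- For any positive integer δ and any string t of length n, the number of cubic runs of t whose minimal period p satisfies 2δ ≤ p ≤ 3δ is less than n/δ. -/
/-- A cubic run is a run of exponent at least `3`. -/
def IsCubicRun {α : Type*} (t : ℕ → α) (n i j : ℕ) : Prop :=
  IsRun t n i j ∧ 3 * minPeriod t i j ≤ j + 1 - i

def PeriodicOn {α : Type*} (t : ℕ → α) (i j p : ℕ) : Prop :=
  ∀ k, i ≤ k → k + p ≤ j → t (k + p) = t k

section Periodicity

variable {α : Type*} {t : ℕ → α} {i j p q : ℕ}

theorem IsPeriodOf.periodicOn (h : IsPeriodOf t i j p) : PeriodicOn t i j p := h.2.2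

theorem isPeriodOf_length (h : i ≤ j) : IsPeriodOf t i j (j + 1 - i) :=
  ⟨by omega, le_rfl, fun _ _ _ => by omega⟩

theorem minPeriod_isPeriodOf (h : i ≤ j) : IsPeriodOf t i j (minPeriod t i j) :=
  Nat.sInf_mem (s := {p | IsPeriodOf t i j p}) ⟨_, isPeriodOf_length h⟩

theorem minPeriod_pos (h : i ≤ j) : 0 < minPeriod t i j := (minPeriod_isPeriodOf h).1

theorem periodicOn_minPeriod (h : i ≤ j) : PeriodicOn t i j (minPeriod t i j) :=
  (minPeriod_isPeriodOf h).periodicOn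

theorem minPeriod_le_of_periodicOn (h : PeriodicOn t i j p) (hp : 0 < p) (hij : i ≤ j) :
    minPeriod t i j ≤ p := by
  rcases le_or_gt p (j + 1 - i) with hle | hlt
  · exact Nat.sInf_le ⟨hp, hle, h⟩
  · exact (Nat.sInf_le (isPeriodOf_length hij)).trans hlt.le

theorem PeriodicOn.mono {i' j' : ℕ} (h : PeriodicOn t i j p) (hi : i ≤ i') (hj : j' ≤ j) :
    PeriodicOn t i' j' p :=
  fun k hk hkp => h k (hi.trans hk) (hkp.trans hj)

theorem PeriodicOn.union {i' j' : ℕ} (h : PeriodicOn t i j p) (h' : PeriodicOn t i' j' p)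
    (hov : i' + p ≤ j + 1) : PeriodicOn t i (max j j') p := by
  intro k hk hkp
  by_cases hkj : k + p ≤ j
  · exact h k hk hkj
  · exact h' k (by omega) (by omega)

theorem PeriodicOn.apply_add_mul (h : PeriodicOn t i j p) {k : ℕ} (m : ℕ) (hk : i ≤ k)
    (hkm : k + m * p ≤ j) : t (k + m * p) = t k := by
  induction m with
  | zero => simp
  | succ m ih =>
    rw [Nat.succ_mul, ← add_assoc] at hkm ⊢
    rw [h _ (by omega) hkm, ih (by omega)]

theorem PeriodicOn.eq_of_modEq (h : PeriodicOn t i j p) {k l : ℕ} (hk : i ≤ k) (hkj : k ≤ j)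
    (hl : i ≤ l) (hlj : l ≤ j) (hkl : k ≡ l [MOD p]) : t k = t l := by
  wlog hle : k ≤ l generalizing k l
  · exact (this hl hlj hk hkj hkl.symm (by omega)).symm
  obtain ⟨m, hm⟩ := (Nat.modEq_iff_dvd' hle).1 hkl
  have hl_eq : l = k + m * p := by rw [mul_comm]; omega
  subst hl_eq
  exact (h.apply_add_mul m hk hlj).symm

theorem PeriodicOn.extend {a b g : ℕ} (hp : PeriodicOn t i j p) (hg : PeriodicOn t a b g)
    (hia : i ≤ a) (hbj : b ≤ j) (hlen : a + p + g ≤ b + 1) (hp0 : 0 < p) :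
    PeriodicOn t i j g := by
  intro k hk hkg
  -- the representative of `k` modulo `p` in `[a, a + p)`
  set r := a + (k + p * a - a) % p
  have hr : r < a + p := by have := Nat.mod_lt (k + p * a - a) hp0; omega
  have hrk : r ≡ k [MOD p] :=
    calc r ≡ a + (k + p * a - a) [MOD p] := (Nat.mod_modEq _ _).add_left a
      _ = k + p * a := by have := Nat.le_mul_of_pos_left a hp0; omega
      _ ≡ k [MOD p] := Nat.add_mul_mod_self_left k p a
  calc t (k + g) = t (r + g) :=
        hp.eq_of_modEq (by omega) hkg (by omega) (by omega) (hrk.add_right g).symm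
    _ = t r := hg r (by omega) (by omega)
    _ = t k := hp.eq_of_modEq (by omega) (by omega) hk (by omega) hrk

-- The Fine–Wilf periodicity lemma.
theorem PeriodicOn.gcd (hp : PeriodicOn t i j p) (hq : PeriodicOn t i j q)
    (hlen : i + p + q ≤ j + 1) : PeriodicOn t i j (Nat.gcd p q) := by
  induction hs : p + q using Nat.strong_induction_on generalizing p q j with
  | _ s ih =>
  wlog hpq : p ≤ q generalizing p q
  · rw [Nat.gcd_comm]
    exact this hq hp (by omega) (by omega) (by omega)
  rcases Nat.eq_zero_or_pos p with rfl | hp0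
  · simpa using hq
  rcases hpq.eq_or_lt with rfl | hlt
  · simpa using hp
  have hqp : PeriodicOn t i (j - p) (q - p) := by
    intro k hk hkq
    rw [← hp _ (by omega) (by omega), show k + (q - p) + p = k + q by omega]
    exact hq k hk (by omega)
  have hg : PeriodicOn t i (j - p) (Nat.gcd p q) := by
    rw [← Nat.gcd_sub_self_right hpq]
    exact ih _ (by omega) (hp.mono le_rfl (by omega)) hqp (by omega) rfl
  have hgq : Nat.gcd p q ≤ q - p := by
    rw [← Nat.gcd_sub_self_right hpq]
    exact Nat.gcd_le_right _ (by omega)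
  exact hp.extend hg le_rfl (by omega) (by omega) hp0

theorem minPeriod_le_of_overlap {i₁ j₁ i₂ j₂ : ℕ} (hi₁ : i₁ ≤ i) (hj₁ : j ≤ j₁) (hi₂ : i₂ ≤ i)
    (hj₂ : j ≤ j₂) (hij : i ≤ j)
    (hlen : i + minPeriod t i₁ j₁ + minPeriod t i₂ j₂ ≤ j + 1) :
    minPeriod t i₁ j₁ ≤ minPeriod t i₂ j₂ := by
  have hp₁ : 0 < minPeriod t i₁ j₁ := minPeriod_pos (by omega)
  have hp₂ : 0 < minPeriod t i₂ j₂ := minPeriod_pos (by omega)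
  have hg : PeriodicOn t i j (Nat.gcd (minPeriod t i₁ j₁) (minPeriod t i₂ j₂)) :=
    ((periodicOn_minPeriod (by omega)).mono hi₁ hj₁).gcd
      ((periodicOn_minPeriod (by omega)).mono hi₂ hj₂) hlen
  have hg₂ := Nat.gcd_le_right (minPeriod t i₁ j₁) hp₂
  calc minPeriod t i₁ j₁ ≤ Nat.gcd (minPeriod t i₁ j₁) (minPeriod t i₂ j₂) :=
        minPeriod_le_of_periodicOn
          ((periodicOn_minPeriod (by omega)).extend hg hi₁ hj₁ (by omega) hp₁)
          (Nat.gcd_pos_of_pos_left _ hp₁) (by omega)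
    _ ≤ minPeriod t i₂ j₂ := hg₂

theorem minPeriod_eq_of_overlap {i₁ j₁ i₂ j₂ : ℕ} (hi₁ : i₁ ≤ i) (hj₁ : j ≤ j₁) (hi₂ : i₂ ≤ i)
    (hj₂ : j ≤ j₂) (hij : i ≤ j)
    (hlen : i + minPeriod t i₁ j₁ + minPeriod t i₂ j₂ ≤ j + 1) :
    minPeriod t i₁ j₁ = minPeriod t i₂ j₂ :=
  le_antisymm (minPeriod_le_of_overlap hi₁ hj₁ hi₂ hj₂ hij hlen)
    (minPeriod_le_of_overlap hi₂ hj₂ hi₁ hj₁ hij (by omega))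

end Periodicity

section Runs

variable {α : Type*} {t : ℕ → α} {n i j : ℕ}

theorem IsRun.eq_of_periodicOn {i' j' : ℕ} (h : IsRun t n i j)
    (hp : PeriodicOn t i' j' (minPeriod t i j)) (hi' : 1 ≤ i') (hi : i' ≤ i) (hj : j ≤ j')
    (hj' : j' ≤ n) : i' = i ∧ j' = j := by
  obtain ⟨-, hij, -, -, hleft, hright⟩ := h
  have hp0 := minPeriod_pos (t := t) hij
  constructor
  · by_contra hne
    have := minPeriod_le_of_periodicOn (hp.mono (i' := i - 1) (j' := j) (by omega) hj) hp0 (by omega)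
    exact absurd (hleft (by omega)) (by omega)
  · by_contra hne
    have := minPeriod_le_of_periodicOn (hp.mono (i' := i) (j' := j + 1) hi (by omega)) hp0 (by omega)
    exact absurd (hright (by omega)) (by omega)

theorem IsRun.eq_of_overlap {i₁ j₁ i₂ j₂ : ℕ} (h₁ : IsRun t n i₁ j₁) (h₂ : IsRun t n i₂ j₂)
    (hle : i₁ ≤ i₂) (hov : i₂ + minPeriod t i₁ j₁ + minPeriod t i₂ j₂ ≤ min j₁ j₂ + 1) :
    i₁ = i₂ ∧ j₁ = j₂ := by
  have hp₁ := minPeriod_pos (t := t) h₁.2.1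
  have hp : minPeriod t i₁ j₁ = minPeriod t i₂ j₂ :=
    minPeriod_eq_of_overlap hle (min_le_left _ _) le_rfl (min_le_right _ _) (by omega) hov
  have hunion : PeriodicOn t i₁ (max j₁ j₂) (minPeriod t i₁ j₁) := by
    have hov₁ : i₂ + minPeriod t i₁ j₁ ≤ j₁ + 1 := by omega
    refine (periodicOn_minPeriod h₁.2.1).union ?_ hov₁
    rw [hp]
    exact periodicOn_minPeriod h₂.2.1
  have hn : max j₁ j₂ ≤ n := max_le h₁.2.2.1 h₂.2.2.1
  obtain ⟨-, e₁⟩ := h₁.eq_of_periodicOn hunion h₁.1 le_rfl (le_max_left _ _) hn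
  rw [hp] at hunion
  obtain ⟨e₂, e₃⟩ := h₂.eq_of_periodicOn hunion h₁.1 hle (le_max_right _ _) hn
  omega

theorem IsCubicRun.add_three_mul_minPeriod_le (h : IsCubicRun t n i j) :
    i + 3 * minPeriod t i j ≤ n + 1 := by
  obtain ⟨⟨-, hij, hjn, -⟩, hcube⟩ := h
  omega

theorem IsCubicRun.eq_of_start_lt_add {δ i₁ j₁ i₂ j₂ : ℕ} (h₁ : IsCubicRun t n i₁ j₁)
    (h₂ : IsCubicRun t n i₂ j₂) (hp₁ : 2 * δ ≤ minPeriod t i₁ j₁)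
    (hp₁' : minPeriod t i₁ j₁ ≤ 3 * δ) (hp₂ : 2 * δ ≤ minPeriod t i₂ j₂)
    (hp₂' : minPeriod t i₂ j₂ ≤ 3 * δ) (hle : i₁ ≤ i₂) (hclose : i₂ < i₁ + δ) :
    i₁ = i₂ ∧ j₁ = j₂ := by
  obtain ⟨hrun₁, hcube₁⟩ := h₁
  obtain ⟨hrun₂, hcube₂⟩ := h₂
  have := hrun₁.2.1
  have := hrun₂.2.1
  exact hrun₁.eq_of_overlap hrun₂ hle (by omega)

theorem ncard_cubicRuns_le {δ : ℕ} (hδ : 0 < δ) :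
    {ij : ℕ × ℕ | IsCubicRun t n ij.1 ij.2 ∧
      2 * δ ≤ minPeriod t ij.1 ij.2 ∧ minPeriod t ij.1 ij.2 ≤ 3 * δ}.ncard ≤ n / δ - 5 := by
  set S := {ij : ℕ × ℕ | IsCubicRun t n ij.1 ij.2 ∧
      2 * δ ≤ minPeriod t ij.1 ij.2 ∧ minPeriod t ij.1 ij.2 ≤ 3 * δ}
  have hinj : Set.InjOn (fun ij : ℕ × ℕ => (ij.1 - 1) / δ) S := by
    rintro ⟨i₁, j₁⟩ ⟨h₁, hp₁, hp₁'⟩ ⟨i₂, j₂⟩ ⟨h₂, hp₂, hp₂'⟩ hblock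
    wlog hle : i₁ ≤ i₂ generalizing i₁ j₁ i₂ j₂
    · exact (this i₂ j₂ h₂ hp₂ hp₂' i₁ j₁ h₁ hp₁ hp₁' hblock.symm (by omega)).symm
    have hclose : i₂ < i₁ + δ := by
      have h₁div := Nat.div_add_mod (i₁ - 1) δ
      have h₂div := Nat.div_add_mod (i₂ - 1) δ
      have := Nat.mod_lt (i₂ - 1) hδ
      have := h₁.1.1
      rw [show (i₁ - 1) / δ = (i₂ - 1) / δ from hblock] at h₁div
      omega
    obtain ⟨rfl, rfl⟩ := h₁.eq_of_start_lt_add h₂ hp₁ hp₁' hp₂ hp₂' hle hclose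
    rfl
  have hmaps : Set.MapsTo (fun ij : ℕ × ℕ => (ij.1 - 1) / δ) S (Finset.range (n / δ - 5)) := by
    rintro ⟨i, j⟩ ⟨h, hp, -⟩
    have hstart := h.add_three_mul_minPeriod_le
    have hi := h.1.1
    dsimp only at hp hstart hi
    have : (i - 1) / δ + 6 ≤ n / δ := by
      rw [← Nat.add_mul_div_left _ _ hδ]
      exact Nat.div_le_div_right (by omega)
    simp only [Finset.coe_range, Set.mem_Iio]
    omega
  calc S.ncard ≤ (Finset.range (n / δ - 5) : Set ℕ).ncard :=
        Set.ncard_le_ncard_of_injOn _ hmaps hinj (Finset.range _).finite_toSet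
    _ = n / δ - 5 := by simp

end Runs

theorem number_of_cubic_runs_with_period_between_general {α : Type*}
    (δ n : ℕ) (hδ : 0 < δ) (hn : 0 < n) (t : ℕ → α) :
    (({ij : ℕ × ℕ | IsCubicRun t n ij.1 ij.2 ∧
        2 * δ ≤ minPeriod t ij.1 ij.2 ∧ minPeriod t ij.1 ij.2 ≤ 3 * δ}.ncard : ℝ))
      < n / δ := by
  refine (Nat.cast_le.2 (ncard_cubicRuns_le hδ)).trans_lt ?_
  rcases Nat.eq_zero_or_pos (n / δ - 5) with h | h
  · rw [h, Nat.cast_zero]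
    positivity
  · calc ((n / δ - 5 : ℕ) : ℝ) < (n / δ : ℕ) := by exact_mod_cast (by omega : n / δ - 5 < n / δ)
      _ ≤ n / δ := Nat.cast_div_le

/-- For any positive `δ` and any string of length `n ≥ 1`, the number of cubic
runs with minimal period in `[2δ, 3δ]` is less than `n/δ`. -/
theorem number_of_cubic_runs_with_period_between {α : Type*} [LinearOrder α]
    (δ n : ℕ) (hδ : 0 < δ) (hn : 0 < n) (t : ℕ → α) :
    (({ij : ℕ × ℕ | IsCubicRun t n ij.1 ij.2 ∧
        2 * δ ≤ minPeriod t ij.1 ij.2 ∧ minPeriod t ij.1 ij.2 ≤ 3 * δ}.ncard : ℝ))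
      < n / δ :=
  number_of_cubic_runs_with_period_between_general δ n hδ hn t
end
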